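/- arXiv:2203.11923 — 3 statements merged into one kernel-verified Lean document; each statement's English description precedes it below -/
import Mathlib

section
/- Let M ∈ ℕ with M ≥ 1, let ℓ ≥ 1, let Δ > 0, τ > 0, and let h_1, …, h_ℓ ∈ ℝ with |h_i| ≤ τΔ for all i. Let A_1, …, A_ℓ ∈ ℂ and define, with D_M(ω) := Σ_{m=0}^{M} e^{2πi m ω}, the function R_A(ω) := (1/(2ℓ−1)!) · Σ_{i=1}^{ℓ} A_i ∫₀¹ D_M^{(2ℓ)}(ω + h_i r) (h_i − h_i r)^{2ℓ−1} h_i dr. Then ‖R_A‖_{L²(0,1)} ≤ (τΔ)^{2ℓ} · √(M+1) · (2πM)^{2ℓ} · (1/(2ℓ−1)!) · Σ_{i=1}^{ℓ} |A_i|. -/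
open scoped BigOperators

/-- The modified Dirichlet kernel `D_M(ω) = Σ_{m=0}^{M} e^{2πi m ω}`. -/
noncomputable def DirichletKer (M : ℕ) : ℝ → ℂ :=
  fun ω => ∑ m ∈ Finset.range (M + 1),
    Complex.exp (2 * (Real.pi : ℂ) * Complex.I * (m : ℂ) * (ω : ℂ))

/-- The Taylor remainder term
`R_A(ω) = (1/(2ℓ-1)!) Σ_i A_i ∫₀¹ D_M^{(2ℓ)}(ω + h_i r) (h_i - h_i r)^{2ℓ-1} h_i dr`. -/
noncomputable def RAterm (M ℓ : ℕ) (h : Fin ℓ → ℝ) (A : Fin ℓ → ℂ) (ω : ℝ) : ℂ :=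
  (1 / ((2 * ℓ - 1).factorial : ℂ)) * ∑ i, A i *
    ∫ r in (0 : ℝ)..1,
      iteratedDeriv (2 * ℓ) (DirichletKer M) (ω + h i * r) *
        ((h i - h i * r : ℝ) : ℂ) ^ (2 * ℓ - 1) * ((h i : ℝ) : ℂ)

/-!
`R_A` is a trigonometric polynomial with frequencies `0, …, M`: differentiating `D_M` `2ℓ` times
multiplies the `m`-th mode `e_m(ω) = exp(2πimω)` by `(2πim)^{2ℓ}`, and the shift `ω ↦ ω + h_i r`
multiplies it by the unimodular factor `e_m(h_i r)`. By Parseval its `L²(0,1)` norm is the `ℓ²` norm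
of its `M + 1` coefficients, and each coefficient is bounded by
`(2πM)^{2ℓ} (τΔ)^{2ℓ} Σ |A_i| / (2ℓ-1)!` because `|h_i - h_i r|^{2ℓ-1} |h_i| ≤ (τΔ)^{2ℓ}` on `[0,1]`.
-/

open Complex intervalIntegral MeasureTheory
open scoped Real ComplexConjugate

noncomputable def fourierMode (m : ℤ) (ω : ℝ) : ℂ :=
  exp (2 * π * I * m * ω)

lemma continuous_fourierMode (m : ℤ) : Continuous (fourierMode m) := by
  unfold fourierMode; fun_prop

lemma hasDerivAt_fourierMode (m : ℤ) (ω : ℝ) :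
    HasDerivAt (fourierMode m) (2 * π * I * m * fourierMode m ω) ω := by
  refine (((hasDerivAt_id (ω : ℂ)).const_mul (2 * π * I * m)).cexp.comp_ofReal).congr_deriv ?_
  simp only [fourierMode, id]; ring

lemma norm_fourierMode (m : ℤ) (ω : ℝ) : ‖fourierMode m ω‖ = 1 := by
  rw [fourierMode, show 2 * π * I * m * ω = ((2 * π * m * ω : ℝ) : ℂ) * I by push_cast; ring,
    norm_exp_ofReal_mul_I]

lemma fourierMode_add (m : ℤ) (x y : ℝ) :
    fourierMode m (x + y) = fourierMode m x * fourierMode m y := by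
  simp only [fourierMode, ← exp_add]; push_cast; ring_nf

lemma fourierMode_mul_conj (m n : ℤ) (ω : ℝ) :
    fourierMode m ω * conj (fourierMode n ω) = fourierMode (m - n) ω := by
  simp only [fourierMode, ← exp_conj, ← exp_add, map_mul, map_ofNat, conj_I, conj_ofReal,
    map_intCast]
  push_cast; ring_nf

lemma integral_fourierMode (k : ℤ) :
    ∫ ω in (0 : ℝ)..1, fourierMode k ω = if k = 0 then 1 else 0 := by
  split_ifs with hk
  · simp [hk, fourierMode]
  · have hc : 2 * π * I * k ≠ 0 := by simp [Real.pi_ne_zero, I_ne_zero, hk]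
    have h1 : exp (2 * π * I * k) = 1 := by rw [mul_comm, exp_int_mul_two_pi_mul_I]
    simp [fourierMode, integral_exp_mul_complex hc, h1]

lemma integral_fourierMode_mul_conj (m n : ℤ) :
    ∫ ω in (0 : ℝ)..1, fourierMode m ω * conj (fourierMode n ω) = if m = n then 1 else 0 := by
  simp_rw [fourierMode_mul_conj, integral_fourierMode, sub_eq_zero]

theorem integral_norm_sq_sum_fourierMode (s : Finset ℤ) (c : ℤ → ℂ) :
    ∫ ω in (0 : ℝ)..1, ‖∑ m ∈ s, c m * fourierMode m ω‖ ^ 2 = ∑ m ∈ s, ‖c m‖ ^ 2 := by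
  have hint : ∀ m n : ℤ, IntervalIntegrable
      (fun ω => c m * conj (c n) * (fourierMode m ω * conj (fourierMode n ω))) volume 0 1 :=
    fun m n => by
      apply Continuous.intervalIntegrable
      have := continuous_fourierMode m; have := continuous_fourierMode n; fun_prop
  have expand : ∀ ω, ((‖∑ m ∈ s, c m * fourierMode m ω‖ ^ 2 : ℝ) : ℂ) =
      ∑ m ∈ s, ∑ n ∈ s, c m * conj (c n) * (fourierMode m ω * conj (fourierMode n ω)) := by
    intro ω
    rw [ofReal_pow, ← mul_conj', map_sum, Finset.sum_mul_sum]
    simp only [map_mul]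
    exact Finset.sum_congr rfl fun m _ => Finset.sum_congr rfl fun n _ => by ring
  apply ofReal_injective
  rw [← intervalIntegral.integral_ofReal]
  simp_rw [expand]
  rw [integral_finsetSum fun m _ => by
    simpa only [Finset.sum_fn] using IntervalIntegrable.sum s fun n _ => hint m n]
  simp_rw [integral_finsetSum fun n _ => hint _ n, intervalIntegral.integral_const_mul,
    integral_fourierMode_mul_conj, mul_ite, mul_one, mul_zero, Finset.sum_ite_eq, mul_conj']
  push_cast
  exact Finset.sum_congr rfl fun m hm => by simp [hm]

theorem iteratedDeriv_sum_fourierMode (s : Finset ℤ) (a : ℤ → ℂ) (n : ℕ) :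
    iteratedDeriv n (fun ω => ∑ m ∈ s, a m * fourierMode m ω) =
      fun ω => ∑ m ∈ s, a m * (2 * π * I * m) ^ n * fourierMode m ω := by
  induction n generalizing a with
  | zero => simp
  | succ n ih =>
    have hderiv : deriv (fun ω => ∑ m ∈ s, a m * fourierMode m ω) =
        fun ω => ∑ m ∈ s, a m * (2 * π * I * m) * fourierMode m ω := by
      funext ω
      refine (HasDerivAt.fun_sum fun m _ =>
        (hasDerivAt_fourierMode m ω).const_mul (a m)).deriv.trans ?_
      exact Finset.sum_congr rfl fun m _ => by ring
    rw [iteratedDeriv_succ', hderiv, ih]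
    exact funext fun ω => Finset.sum_congr rfl fun m _ => by ring

lemma dirichletKer_eq_sum_fourierMode (M : ℕ) :
    DirichletKer M = fun ω => ∑ m ∈ Finset.Icc (0 : ℤ) M, fourierMode m ω := by
  have hIcc : Finset.Icc (0 : ℤ) M = (Finset.range (M + 1)).map Nat.castEmbedding := by
    ext m
    simp only [Finset.mem_Icc, Finset.mem_map, Finset.mem_range, Nat.castEmbedding_apply]
    constructor
    · rintro ⟨h0, hM⟩
      exact ⟨m.toNat, by omega, by omega⟩
    · rintro ⟨k, hk, rfl⟩
      omega
  funext ω
  simp [DirichletKer, hIcc, fourierMode]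

lemma iteratedDeriv_dirichletKer (M n : ℕ) :
    iteratedDeriv n (DirichletKer M) =
      fun ω => ∑ m ∈ Finset.Icc (0 : ℤ) M, (2 * π * I * m) ^ n * fourierMode m ω := by
  rw [dirichletKer_eq_sum_fourierMode]
  simpa using iteratedDeriv_sum_fourierMode (Finset.Icc (0 : ℤ) M) 1 n

theorem integral_sum_fourierMode_shift_mul (s : Finset ℤ) (a : ℤ → ℂ) (h ω : ℝ) {w : ℝ → ℂ}
    (hw : IntervalIntegrable w volume 0 1) :
    ∫ r in (0 : ℝ)..1, (∑ m ∈ s, a m * fourierMode m (ω + h * r)) * w r =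
      ∑ m ∈ s, (a m * ∫ r in (0 : ℝ)..1, fourierMode m (h * r) * w r) * fourierMode m ω := by
  have hint : ∀ m : ℤ, IntervalIntegrable (fun r => fourierMode m (h * r) * w r) volume 0 1 :=
    fun m => hw.continuousOn_mul
      ((continuous_fourierMode m).comp (continuous_const_mul h)).continuousOn
  calc ∫ r in (0 : ℝ)..1, (∑ m ∈ s, a m * fourierMode m (ω + h * r)) * w r
      = ∫ r in (0 : ℝ)..1, ∑ m ∈ s, a m * fourierMode m ω * (fourierMode m (h * r) * w r) := by
        refine integral_congr fun r _ => ?_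
        simp only [Finset.sum_mul, fourierMode_add]
        exact Finset.sum_congr rfl fun m _ => by ring
    _ = ∑ m ∈ s, a m * fourierMode m ω * ∫ r in (0 : ℝ)..1, fourierMode m (h * r) * w r := by
        rw [integral_finsetSum fun m _ => (hint m).const_mul _]
        simp_rw [intervalIntegral.integral_const_mul]
    _ = _ := Finset.sum_congr rfl fun m _ => by ring

lemma norm_integral_fourierMode_mul_le (m : ℤ) (h : ℝ) {w : ℝ → ℂ} {C : ℝ}
    (hC : ∀ r ∈ Set.Icc (0 : ℝ) 1, ‖w r‖ ≤ C) :
    ‖∫ r in (0 : ℝ)..1, fourierMode m (h * r) * w r‖ ≤ C := by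
  have := norm_integral_le_of_norm_le_const (a := 0) (b := 1)
      (f := fun r => fourierMode m (h * r) * w r) fun r hr => by
    rw [norm_mul, norm_fourierMode, one_mul]
    rw [Set.uIoc_of_le zero_le_one] at hr
    exact hC r (Set.Ioc_subset_Icc_self hr)
  simpa using this

lemma abs_sub_mul_pow_mul_le {x T r : ℝ} (hx : |x| ≤ T) (hr : r ∈ Set.Icc (0 : ℝ) 1) (n : ℕ) :
    |x - x * r| ^ n * |x| ≤ T ^ (n + 1) := by
  have hxr : |x - x * r| ≤ T := by
    rw [show x - x * r = x * (1 - r) by ring, abs_mul,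
      abs_of_nonneg (show 0 ≤ 1 - r by linarith [hr.2])]
    nlinarith [abs_nonneg x, hr.1]
  rw [pow_succ]
  exact mul_le_mul (pow_le_pow_left₀ (abs_nonneg _) hxr n) hx (abs_nonneg x)
    (pow_nonneg ((abs_nonneg _).trans hxr) n)

lemma norm_integral_fourierMode_mul_sub_pow_le (m : ℤ) (n : ℕ) {x T : ℝ} (hx : |x| ≤ T) :
    ‖∫ r in (0 : ℝ)..1, fourierMode m (x * r) * (((x - x * r : ℝ) : ℂ) ^ n * x)‖ ≤ T ^ (n + 1) :=
  norm_integral_fourierMode_mul_le m x fun r hr => by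
    simpa only [norm_mul, norm_pow, norm_real, Real.norm_eq_abs] using
      abs_sub_mul_pow_mul_le hx hr n

lemma sqrt_sum_norm_sq_le {ι E : Type*} [SeminormedAddCommGroup E] (s : Finset ι) (c : ι → E)
    {B : ℝ} (hc : ∀ i ∈ s, ‖c i‖ ≤ B) :
    √(∑ i ∈ s, ‖c i‖ ^ 2) ≤ √(s.card : ℝ) * B := by
  rcases s.eq_empty_or_nonempty with rfl | ⟨i, hi⟩
  · simp
  have hB : 0 ≤ B := (norm_nonneg _).trans (hc i hi)
  rw [← Real.sqrt_sq hB, ← Real.sqrt_mul (Nat.cast_nonneg _)]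
  refine Real.sqrt_le_sqrt ?_
  calc ∑ i ∈ s, ‖c i‖ ^ 2 ≤ ∑ _i ∈ s, B ^ 2 :=
        Finset.sum_le_sum fun i hi => pow_le_pow_left₀ (norm_nonneg _) (hc i hi) 2
    _ = s.card * B ^ 2 := by rw [Finset.sum_const, nsmul_eq_mul]

noncomputable def RAcoeff (ℓ : ℕ) (h : Fin ℓ → ℝ) (A : Fin ℓ → ℂ) (m : ℤ) : ℂ :=
  1 / ((2 * ℓ - 1).factorial : ℂ) * ∑ i, A i * ((2 * π * I * m) ^ (2 * ℓ) *
    ∫ r in (0 : ℝ)..1, fourierMode m (h i * r) * (((h i - h i * r : ℝ) : ℂ) ^ (2 * ℓ - 1) * h i))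

lemma RAterm_eq_sum_fourierMode (M ℓ : ℕ) (h : Fin ℓ → ℝ) (A : Fin ℓ → ℂ) :
    RAterm M ℓ h A = fun ω => ∑ m ∈ Finset.Icc (0 : ℤ) M, RAcoeff ℓ h A m * fourierMode m ω := by
  funext ω
  have hw : ∀ i, IntervalIntegrable
      (fun r : ℝ => ((h i - h i * r : ℝ) : ℂ) ^ (2 * ℓ - 1) * h i) volume 0 1 := fun i => by
    apply Continuous.intervalIntegrable; fun_prop
  simp only [RAterm, iteratedDeriv_dirichletKer, mul_assoc (Finset.sum _ _),
    integral_sum_fourierMode_shift_mul _ _ _ _ (hw _)]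
  simp only [RAcoeff, Finset.mul_sum, Finset.sum_mul]
  rw [Finset.sum_comm]
  exact Finset.sum_congr rfl fun m _ => Finset.sum_congr rfl fun i _ => by ring

lemma norm_RAcoeff_le {ℓ : ℕ} {h : Fin ℓ → ℝ} {T : ℝ} (hh : ∀ i, |h i| ≤ T) (A : Fin ℓ → ℂ)
    {m : ℤ} {M : ℝ} (hm : |(m : ℝ)| ≤ M) :
    ‖RAcoeff ℓ h A m‖ ≤
      T ^ (2 * ℓ) * (2 * π * M) ^ (2 * ℓ) * (1 / ((2 * ℓ - 1).factorial : ℝ)) * ∑ i, ‖A i‖ := by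
  have hfreq : ‖2 * π * I * m‖ ^ (2 * ℓ) ≤ (2 * π * M) ^ (2 * ℓ) := by
    have : ‖2 * π * I * m‖ = 2 * π * |(m : ℝ)| := by
      simp [abs_of_pos Real.pi_pos]
    rw [this]
    gcongr
  have hterm : ∀ i, ‖A i * ((2 * π * I * m) ^ (2 * ℓ) * ∫ r in (0 : ℝ)..1,
        fourierMode m (h i * r) * (((h i - h i * r : ℝ) : ℂ) ^ (2 * ℓ - 1) * h i))‖ ≤
      ‖A i‖ * ((2 * π * M) ^ (2 * ℓ) * T ^ (2 * ℓ)) := fun i => by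
    have hℓ : 2 * ℓ - 1 + 1 = 2 * ℓ := by have := i.pos; omega
    have hint := norm_integral_fourierMode_mul_sub_pow_le m (2 * ℓ - 1) (hh i)
    rw [hℓ] at hint
    rw [norm_mul, norm_mul, norm_pow]
    exact mul_le_mul_of_nonneg_left (mul_le_mul hfreq hint (norm_nonneg _)
      ((pow_nonneg (norm_nonneg _) _).trans hfreq)) (norm_nonneg _)
  calc ‖RAcoeff ℓ h A m‖
      ≤ 1 / ((2 * ℓ - 1).factorial : ℝ) * ∑ i, ‖A i‖ * ((2 * π * M) ^ (2 * ℓ) * T ^ (2 * ℓ)) := by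
        rw [RAcoeff, norm_mul, norm_div, norm_one, Complex.norm_natCast]
        gcongr
        exact (norm_sum_le _ _).trans (Finset.sum_le_sum fun i _ => hterm i)
    _ = _ := by rw [← Finset.sum_mul]; ring

theorem RA_L2_bound_general (M ℓ : ℕ) (Δ τ : ℝ)
    (h : Fin ℓ → ℝ) (hh : ∀ i, |h i| ≤ τ * Δ) (A : Fin ℓ → ℂ) :
    Real.sqrt (∫ ω in (0 : ℝ)..1, ‖RAterm M ℓ h A ω‖ ^ 2) ≤
      (τ * Δ) ^ (2 * ℓ) * Real.sqrt ((M : ℝ) + 1) * (2 * Real.pi * M) ^ (2 * ℓ) *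
        (1 / ((2 * ℓ - 1).factorial : ℝ)) * ∑ i, ‖A i‖ := by
  have hcoeff : ∀ m ∈ Finset.Icc (0 : ℤ) M, ‖RAcoeff ℓ h A m‖ ≤
      (τ * Δ) ^ (2 * ℓ) * (2 * π * M) ^ (2 * ℓ) * (1 / ((2 * ℓ - 1).factorial : ℝ)) *
        ∑ i, ‖A i‖ := fun m hm => by
    rw [Finset.mem_Icc] at hm
    refine norm_RAcoeff_le hh A ?_
    rw [abs_of_nonneg (by exact_mod_cast hm.1)]
    exact_mod_cast hm.2
  rw [RAterm_eq_sum_fourierMode, integral_norm_sq_sum_fourierMode]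
  refine (sqrt_sum_norm_sq_le _ _ hcoeff).trans_eq ?_
  rw [Int.card_Icc, sub_zero, Int.toNat_natCast_add_one]
  push_cast
  ring

/-- Lemma (bound on the remainder `R_A`):
`‖R_A‖_{L²(0,1)} ≤ (τΔ)^{2ℓ} √(M+1) (2πM)^{2ℓ} (1/(2ℓ-1)!) Σ_i |A_i|`. -/
theorem RA_L2_bound (M ℓ : ℕ) (hM : 1 ≤ M) (hℓ : 1 ≤ ℓ) (Δ τ : ℝ) (hΔ : 0 < Δ) (hτ : 0 < τ)
    (h : Fin ℓ → ℝ) (hh : ∀ i, |h i| ≤ τ * Δ) (A : Fin ℓ → ℂ) :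
    Real.sqrt (∫ ω in (0 : ℝ)..1, ‖RAterm M ℓ h A ω‖ ^ 2) ≤
      (τ * Δ) ^ (2 * ℓ) * Real.sqrt ((M : ℝ) + 1) * (2 * Real.pi * M) ^ (2 * ℓ) *
        (1 / ((2 * ℓ - 1).factorial : ℝ)) * ∑ i, ‖A i‖ :=
  RA_L2_bound_general M ℓ Δ τ h hh A
end

section
/- For all integers ℓ ≥ 2 and reals τ ≥ 1 there exists a constant C_A = C_A(ℓ, τ) > 0 as follows. Let M ≥ 1 be an integer, let 0 < α ≤ 1, and let 0 = τ_1 < τ_2 < … < τ_ℓ ≤ τ be reals with |τ_i − τ_j| ≥ 1 for all i ≠ j. Set h_i := −τ_i·(α/M), and let (A_1, …, A_ℓ, B_1, …, B_ℓ) be the unique solution of the linear system U_{2ℓ}(h)·(A; B)ᵀ = (0, …, 0, (2ℓ−1)!)ᵀ. Then Σ_{i=1}^{ℓ} |A_i| ≤ C_A · (M/α)^{2ℓ−1}. -/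
open scoped BigOperators

/-- The square `2ℓ × 2ℓ` confluent Vandermonde matrix `U_{2ℓ}(h)`: rows `k = 0, …, 2ℓ-1`,
entry `h_j^k` in column `j` and `k h_j^{k-1}` in column `ℓ + j`. -/
noncomputable def U2l (ℓ : ℕ) (h : Fin ℓ → ℝ) : Matrix (Fin (2 * ℓ)) (Fin ℓ ⊕ Fin ℓ) ℂ :=
  fun k => Sum.elim (fun j => ((h j : ℂ)) ^ (k : ℕ))
    (fun j => ((k : ℕ) : ℂ) * ((h j : ℂ)) ^ ((k : ℕ) - 1))

/-- The right-hand side `(0, …, 0, (2ℓ-1)!)ᵀ` of the finite-difference linear system. -/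
noncomputable def fdRhs (ℓ : ℕ) : Fin (2 * ℓ) → ℂ :=
  fun k => if (k : ℕ) = 2 * ℓ - 1 then ((2 * ℓ - 1).factorial : ℂ) else 0

/-!
For distinct nodes the confluent Vandermonde system is uniquely solvable: a vector in its kernel
gives a functional `p ↦ ∑ⱼ (aⱼ p(hⱼ) + bⱼ p'(hⱼ))` vanishing on polynomials of degree `< 2ℓ`, and
testing it on products of squared linear factors shows it is zero. The unscaled configurations
`-t`, with `t` in `[0, τ]` and `1`-separated, form a compact set of injective node vectors, so by
compactness their weights are uniformly bounded. Scaling the nodes by `s = α/M` multiplies the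
weights `A` by `s^(1-2ℓ)`, since the system approximates a derivative of order `2ℓ - 1`.
-/

open Polynomial Finset Function

section Hermite

variable {K ι : Type*} [Field K] [Fintype ι]

theorem eval_eq_zero_and_derivative_eval_eq_zero_of_sq_dvd {p : K[X]} {c : K}
    (h : (X - C c) ^ 2 ∣ p) : p.eval c = 0 ∧ p.derivative.eval c = 0 := by
  obtain ⟨r, rfl⟩ := h
  simp [derivative_mul, derivative_pow]

theorem sum_eval_add_derivative_eval_eq_zero {z a b : ι → K} {n : ℕ}
    (h : ∀ k < n, ∑ j, (a j * z j ^ k + b j * (k * z j ^ (k - 1))) = 0)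
    {p : K[X]} (hp : p.natDegree < n) :
    ∑ j, (a j * p.eval (z j) + b j * p.derivative.eval (z j)) = 0 := by
  have expand : ∀ j, a j * p.eval (z j) + b j * p.derivative.eval (z j) =
      ∑ k ∈ range n, p.coeff k * (a j * z j ^ k + b j * (k * z j ^ (k - 1))) := by
    intro j
    conv_lhs => rw [p.as_sum_range' n hp]
    simp only [eval_finsetSum, derivative_sum, derivative_monomial, eval_monomial, mul_sum,
      ← sum_add_distrib]
    refine sum_congr rfl fun k _ => ?_
    ring
  simp only [expand]
  rw [sum_comm]
  exact sum_eq_zero fun k hk => by rw [← mul_sum, h k (mem_range.1 hk), mul_zero]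

/-- Testing on `(X - zⱼ) ∏_{m ≠ j} (X - zₘ)²` isolates `bⱼ`, then `∏_{m ≠ j} (X - zₘ)²` isolates
`aⱼ`. -/
theorem eq_zero_of_forall_sum_eval_add_derivative_eval_eq_zero [DecidableEq ι] {z a b : ι → K}
    (hz : Injective z)
    (h : ∀ p : K[X], p.natDegree < 2 * Fintype.card ι →
      ∑ j, (a j * p.eval (z j) + b j * p.derivative.eval (z j)) = 0) (j : ι) :
    a j = 0 ∧ b j = 0 := by
  set P : K[X] := ∏ m ∈ univ.erase j, (X - C (z m)) ^ 2
  have hP_deg : P.natDegree + 1 < 2 * Fintype.card ι := by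
    have hcard := card_erase_of_mem (mem_univ j)
    have hpos := Fintype.card_pos_iff.2 ⟨j⟩
    rw [natDegree_prod_of_monic _ _ fun m _ => (monic_X_sub_C _).pow 2]
    simp only [natDegree_pow, natDegree_X_sub_C, sum_const, hcard, card_univ, smul_eq_mul]
    omega
  have hP_dvd : ∀ m ≠ j, (X - C (z m)) ^ 2 ∣ P := fun m hm =>
    dvd_prod_of_mem _ (mem_erase.2 ⟨hm, mem_univ m⟩)
  have hP_eval : P.eval (z j) ≠ 0 := by
    simp only [P, eval_prod, eval_pow, eval_sub, eval_X, eval_C]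
    exact prod_ne_zero_iff.2 fun m hm =>
      pow_ne_zero _ (sub_ne_zero.2 (hz.ne (mem_erase.1 hm).1.symm))
  have single : ∀ p : K[X], p.natDegree < 2 * Fintype.card ι → (∀ m ≠ j, (X - C (z m)) ^ 2 ∣ p) →
      a j * p.eval (z j) + b j * p.derivative.eval (z j) = 0 := by
    intro p hp hdvd
    rw [← h p hp, sum_eq_single j (fun m _ hm => ?_) (by simp)]
    obtain ⟨h0, h1⟩ := eval_eq_zero_and_derivative_eval_eq_zero_of_sq_dvd (hdvd m hm)
    rw [h0, h1, mul_zero, mul_zero, add_zero]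
  have hb : b j = 0 := by
    have hQ := single ((X - C (z j)) * P)
      ((natDegree_mul_le.trans (by rw [natDegree_X_sub_C]; omega)).trans_lt hP_deg)
      fun m hm => dvd_mul_of_dvd_right (hP_dvd m hm) _
    simp only [derivative_mul, eval_mul, eval_add, eval_sub, eval_X, eval_C, sub_self, zero_mul,
      mul_zero, derivative_sub, derivative_X, derivative_C, sub_zero, one_mul, add_zero,
      zero_add] at hQ
    exact (mul_eq_zero.1 hQ).resolve_right hP_eval
  have ha : a j = 0 := by
    have hP := single P (by omega) hP_dvd
    rw [hb, zero_mul, add_zero] at hP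
    exact (mul_eq_zero.1 hP).resolve_right hP_eval
  exact ⟨ha, hb⟩

end Hermite

open Matrix

section ConfluentVandermonde

variable {ℓ : ℕ}

theorem U2l_mulVec_apply (x : Fin ℓ → ℝ) (a b : Fin ℓ → ℂ) (k : Fin (2 * ℓ)) :
    (U2l ℓ x *ᵥ Sum.elim a b) k =
      ∑ j, (a j * (x j : ℂ) ^ (k : ℕ) + b j * ((k : ℕ) * (x j : ℂ) ^ ((k : ℕ) - 1))) := by
  simp only [mulVec, dotProduct, U2l, Fintype.sum_sum_type, Sum.elim_inl, Sum.elim_inr,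
    ← sum_add_distrib]
  exact sum_congr rfl fun j _ => by ring

theorem U2l_mulVec_eq_zero_iff {x : Fin ℓ → ℝ} (hx : Injective x) {v : Fin ℓ ⊕ Fin ℓ → ℂ} :
    U2l ℓ x *ᵥ v = 0 ↔ v = 0 := by
  refine ⟨fun hv => ?_, fun hv => by rw [hv, mulVec_zero]⟩
  rw [← Sum.elim_comp_inl_inr v] at hv ⊢
  have hmoments : ∀ k < 2 * ℓ, ∑ j, ((v ∘ Sum.inl) j * (x j : ℂ) ^ k +
      (v ∘ Sum.inr) j * (k * (x j : ℂ) ^ (k - 1))) = 0 := fun k hk => by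
    simpa only [U2l_mulVec_apply, Pi.zero_apply] using congrFun hv ⟨k, hk⟩
  have hzero := eq_zero_of_forall_sum_eval_add_derivative_eval_eq_zero
    (Complex.ofReal_injective.comp hx) fun p hp =>
      sum_eval_add_derivative_eval_eq_zero hmoments (by simpa using hp)
  ext (j | j)
  exacts [(hzero j).1, (hzero j).2]

theorem U2l_smul_mulVec_apply (s : ℝ) (x : Fin ℓ → ℝ) (a b : Fin ℓ → ℂ) (k : Fin (2 * ℓ)) :
    (U2l ℓ (s • x) *ᵥ Sum.elim a ((s : ℂ) • b)) k =
      (s : ℂ) ^ (k : ℕ) * (U2l ℓ x *ᵥ Sum.elim a b) k := by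
  simp only [U2l_mulVec_apply, mul_sum, Pi.smul_apply, smul_eq_mul, Complex.ofReal_mul]
  refine sum_congr rfl fun j _ => ?_
  rcases Nat.eq_zero_or_eq_succ_pred (k : ℕ) with hk | hk
  · simp [hk]
  · rw [hk]
    simp only [Nat.succ_sub_one, pow_succ, Nat.cast_succ, mul_pow]
    ring

/-- Row `k` of the system for the nodes `s • x` is `s^k` times row `k` for `x`, and only the last
row of `fdRhs` is nonzero. -/
theorem U2l_mulVec_eq_fdRhs_of_smul {s : ℝ} (hs : s ≠ 0) {x : Fin ℓ → ℝ} {A B : Fin ℓ → ℂ}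
    (h : U2l ℓ (s • x) *ᵥ Sum.elim A B = fdRhs ℓ) :
    U2l ℓ x *ᵥ ((s : ℂ) ^ (2 * ℓ - 1) • Sum.elim A ((s : ℂ)⁻¹ • B)) = fdRhs ℓ := by
  have hs' : (s : ℂ) ≠ 0 := Complex.ofReal_ne_zero.2 hs
  have hrow : ∀ k : Fin (2 * ℓ),
      (s : ℂ) ^ (k : ℕ) * (U2l ℓ x *ᵥ Sum.elim A ((s : ℂ)⁻¹ • B)) k = fdRhs ℓ k := fun k => by
    rw [← U2l_smul_mulVec_apply, smul_inv_smul₀ hs', h]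
  ext k
  rw [mulVec_smul, Pi.smul_apply, smul_eq_mul]
  by_cases hk : (k : ℕ) = 2 * ℓ - 1
  · rw [← hk, hrow]
  · have := hrow k
    rw [fdRhs, if_neg hk] at this ⊢
    rw [(mul_eq_zero.1 this).resolve_left (pow_ne_zero _ hs'), mul_zero]

end ConfluentVandermonde

open Set Metric Bornology

/-- The infimum of `‖M *ᵥ u‖` over `M ∈ K` and unit vectors `u` is attained, hence positive. -/
theorem exists_norm_le_mul_norm_mulVec {𝕜 m n : Type*} [RCLike 𝕜] [Fintype m] [Fintype n]
    {K : Set (Matrix m n 𝕜)} (hK : IsCompact K) (hinj : ∀ M ∈ K, ∀ v, M *ᵥ v = 0 → v = 0) :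
    ∃ C, ∀ M ∈ K, ∀ v, ‖v‖ ≤ C * ‖M *ᵥ v‖ := by
  obtain ⟨c, hc_pos, hc⟩ := (hK.prod (isCompact_sphere (0 : n → 𝕜) 1)).exists_forall_le'
    (f := fun p => ‖p.1 *ᵥ p.2‖) (by fun_prop) fun p hp =>
      norm_pos_iff.2 fun h => ne_zero_of_mem_unit_sphere ⟨p.2, hp.2⟩ (hinj p.1 hp.1 p.2 h)
  refine ⟨c⁻¹, fun M hM v => ?_⟩
  rcases eq_or_ne v 0 with rfl | hv
  · simp
  have hu : (‖v‖⁻¹ : 𝕜) • v ∈ sphere (0 : n → 𝕜) 1 := by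
    simp [norm_smul, hv]
  have := hc (M, (‖v‖⁻¹ : 𝕜) • v) ⟨hM, hu⟩
  rw [mulVec_smul, norm_smul, norm_inv, RCLike.norm_ofReal, abs_norm] at this
  rw [le_inv_mul_iff₀ (norm_pos_iff.2 hv)] at this
  rw [inv_mul_eq_div, le_div_iff₀ hc_pos]
  linarith

theorem continuous_U2l (ℓ : ℕ) : Continuous (U2l ℓ) := by
  refine continuous_pi fun k => continuous_pi fun c => ?_
  cases c <;> simp only [U2l, Sum.elim_inl, Sum.elim_inr] <;> fun_prop

theorem isBounded_setOf_U2l_mulVec_eq {ℓ : ℕ} {K : Set (Fin ℓ → ℝ)} (hK : IsCompact K)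
    (hinj : ∀ x ∈ K, Injective x) (r : Fin (2 * ℓ) → ℂ) :
    IsBounded {v | ∃ x ∈ K, U2l ℓ x *ᵥ v = r} := by
  obtain ⟨C, hC⟩ := exists_norm_le_mul_norm_mulVec (hK.image (continuous_U2l ℓ))
    (by rintro _ ⟨x, hx, rfl⟩ v; exact (U2l_mulVec_eq_zero_iff (hinj x hx)).1)
  refine isBounded_iff_forall_norm_le.2 ⟨C * ‖r‖, ?_⟩
  rintro v ⟨x, hx, rfl⟩
  exact hC _ (mem_image_of_mem _ hx) v

theorem isCompact_setOf_separated {ι : Type*} [Finite ι] (a b δ : ℝ) :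
    IsCompact {t : ι → ℝ | (∀ i, t i ∈ Icc a b) ∧ Pairwise fun i j => δ ≤ |t i - t j|} := by
  refine (isCompact_univ_pi fun _ => isCompact_Icc (a := a) (b := b)).of_isClosed_subset ?_
    fun t ht i _ => ht.1 i
  simp only [Pairwise, ofPred_and, ofPred_forall]
  exact (isClosed_iInter fun i => isClosed_Icc.preimage (continuous_apply i)).inter <|
    isClosed_iInter fun i => isClosed_iInter fun j => isClosed_iInter fun _ =>
      isClosed_le continuous_const (by fun_prop)

/-- Lemma (bound on the finite-difference weights `A_i`): there is `C_A = C_A(ℓ, τ) > 0` such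
that for nodes `h_i = -τ_i α/M` with `0 = τ_1 < … < τ_ℓ ≤ τ`, `|τ_i - τ_j| ≥ 1`, and the
weights solving `U_{2ℓ}(h)(A; B)ᵀ = (0, …, 0, (2ℓ-1)!)ᵀ`, one has
`Σ_i |A_i| ≤ C_A (M/α)^{2ℓ-1}`. -/
theorem fd_weights_A_bound (ℓ : ℕ) (hℓ : 2 ≤ ℓ) (τ : ℝ) :
    ∃ C_A : ℝ, 0 < C_A ∧
      ∀ (M : ℕ), 1 ≤ M → ∀ α : ℝ, 0 < α → α ≤ 1 →
        ∀ t : Fin ℓ → ℝ, t ⟨0, by omega⟩ = 0 → StrictMono t → (∀ i, t i ≤ τ) →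
          (∀ i j : Fin ℓ, i ≠ j → 1 ≤ |t i - t j|) →
          ∀ A B : Fin ℓ → ℂ,
            (U2l ℓ (fun i => -(t i) * (α / M))).mulVec (Sum.elim A B) = fdRhs ℓ →
            ∑ i, ‖A i‖ ≤ C_A * ((M : ℝ) / α) ^ (2 * ℓ - 1) := by
  set T := {t : Fin ℓ → ℝ | (∀ i, t i ∈ Icc 0 τ) ∧ Pairwise fun i j => 1 ≤ |t i - t j|}
  have hinj : ∀ x ∈ -T, Injective x := fun x hx i j hij => by
    by_contra hne
    have := hx.2 hne
    norm_num [hij] at this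
  obtain ⟨R, hR_pos, hR⟩ := (isBounded_setOf_U2l_mulVec_eq (isCompact_setOf_separated 0 τ 1).neg
    hinj (fdRhs ℓ)).exists_pos_norm_le
  refine ⟨ℓ * R, by positivity, fun M hM α hα _ t ht0 hmono htτ hsep A B hsys => ?_⟩
  set s := α / M
  have hs : 0 < s := div_pos hα (Nat.cast_pos.2 hM)
  have ht : -t ∈ -T := Set.neg_mem_neg.2
    ⟨fun i => ⟨ht0 ▸ hmono.monotone (Fin.mk_le_of_le_val (Nat.zero_le i)), htτ i⟩, hsep⟩
  have hsol := U2l_mulVec_eq_fdRhs_of_smul hs.ne' (x := -t) (A := A) (B := B)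
    (by rwa [show s • -t = fun i => -(t i) * (α / M) by ext; simp [s, mul_comm]])
  have hA : ∀ i, ‖A i‖ ≤ R * ((M : ℝ) / α) ^ (2 * ℓ - 1) := fun i => by
    have := (norm_le_pi_norm _ (Sum.inl i)).trans (hR _ ⟨-t, ht, hsol⟩)
    rw [Pi.smul_apply, Sum.elim_inl, smul_eq_mul, norm_mul, norm_pow, Complex.norm_real,
      Real.norm_of_nonneg hs.le] at this
    rw [show (M : ℝ) / α = s⁻¹ from (inv_div _ _).symm, inv_pow, ← div_eq_mul_inv,
      le_div_iff₀ (by positivity), mul_comm]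
    exact this
  calc ∑ i, ‖A i‖ ≤ ∑ _i : Fin ℓ, R * ((M : ℝ) / α) ^ (2 * ℓ - 1) := sum_le_sum fun i _ => hA i
    _ = ℓ * R * ((M : ℝ) / α) ^ (2 * ℓ - 1) := by simp [mul_assoc]
end

section
/- Let x_1, …, x_n be pairwise distinct complex numbers, and let 𝐔_{2n}(x) be the 2n × 2n confluent Vandermonde matrix with rows indexed by k = 0, …, 2n−1, entry x_j^k in column j and entry k·x_j^{k−1} in column n+j. For each λ ∈ {1, …, n} set b_λ := max( 1 + |x_λ|, 1 + 2(1 + |x_λ|)·Σ_{ν≠λ} 1/|x_ν − x_λ| ). Then 𝐔_{2n}(x) is invertible and ‖𝐔_{2n}(x)^{−1}‖_∞ ≤ max_{1≤λ≤n} b_λ · ( Π_{ν≠λ} (1 + |x_ν|)/|x_ν − x_λ| )². -/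
open scoped BigOperators

/-- The maximum-absolute-row-sum operator norm of a square complex matrix. -/
noncomputable def rowSumNorm {n : Type*} [Fintype n] (M : Matrix n n ℂ) : ℝ :=
  ⨆ i, ∑ j, ‖M i j‖

/-- The row index `k ∈ {0, …, 2n-1}` corresponding to an element of `Fin n ⊕ Fin n`
(first summand: `k = i`; second summand: `k = n + i`). -/
def rowIdx (n : ℕ) : Fin n ⊕ Fin n → ℕ :=
  Sum.elim (fun i => (i : ℕ)) (fun i => n + (i : ℕ))

/-- The square `2n × 2n` confluent Vandermonde matrix with rows `k = 0, …, 2n-1`, entry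
`x_j^k` in column `j` and `k x_j^{k-1}` in column `n + j`. -/
noncomputable def UconfSq (n : ℕ) (x : Fin n → ℂ) :
    Matrix (Fin n ⊕ Fin n) (Fin n ⊕ Fin n) ℂ :=
  fun r => Sum.elim
    (fun j => x j ^ rowIdx n r)
    (fun j => ((rowIdx n r : ℕ) : ℂ) * x j ^ (rowIdx n r - 1))

/-!
The rows of `𝐔_{2n}(x)⁻¹` are the coefficient vectors of the Hermite interpolation basis
`h_λ = (1 - 2 L_λ'(x_λ) (X - x_λ)) L_λ²` and `k_λ = (X - x_λ) L_λ²`, where `L_λ` is the Lagrange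
basis polynomial: pairing a coefficient vector with the columns of `𝐔_{2n}(x)` evaluates the
polynomial and its derivative at the nodes. A row sum of `|entries|` is thus the `ℓ¹` norm of
the coefficients, which is submultiplicative; `‖L_λ‖₁ ≤ ∏_{ν≠λ} (1 + |x_ν|)/|x_ν - x_λ|` since
`L_λ` is a product of the factors `(X - x_ν)/(x_λ - x_ν)`, and `L_λ'(x_λ) = Σ_{ν≠λ} 1/(x_λ - x_ν)`.
-/

open Polynomial Finset
open scoped Matrix

namespace Polynomial

section SeminormedRing

variable {R : Type*} [SeminormedRing R]

noncomputable def l1Norm (p : R[X]) : ℝ := p.sum fun _ a => ‖a‖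

lemma l1Norm_eq_sum_of_support_subset {p : R[X]} {s : Finset ℕ} (h : p.support ⊆ s) :
    p.l1Norm = ∑ k ∈ s, ‖p.coeff k‖ :=
  sum_eq_of_subset _ (fun _ => norm_zero) h

lemma l1Norm_nonneg (p : R[X]) : 0 ≤ p.l1Norm :=
  sum_nonneg fun _ _ => norm_nonneg _

@[simp]
lemma l1Norm_zero : (0 : R[X]).l1Norm = 0 := by simp [l1Norm]

@[simp]
lemma l1Norm_C (a : R) : (C a).l1Norm = ‖a‖ := by
  rw [l1Norm_eq_sum_of_support_subset (support_C_subset a), sum_singleton, coeff_C_zero]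

@[simp]
lemma l1Norm_X [NormOneClass R] : (X : R[X]).l1Norm = 1 := by
  have : Nontrivial R := NormOneClass.nontrivial
  rw [l1Norm_eq_sum_of_support_subset support_X.subset, sum_singleton, coeff_X_one, norm_one]

@[simp]
lemma l1Norm_neg (p : R[X]) : (-p).l1Norm = p.l1Norm := by
  simp [l1Norm, Polynomial.sum_def]

lemma l1Norm_add_le (p q : R[X]) : (p + q).l1Norm ≤ p.l1Norm + q.l1Norm := by
  classical
  rw [l1Norm_eq_sum_of_support_subset support_add,
    l1Norm_eq_sum_of_support_subset (p := p) subset_union_left,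
    l1Norm_eq_sum_of_support_subset (p := q) subset_union_right, ← sum_add_distrib]
  exact sum_le_sum fun k _ => by simpa only [coeff_add] using norm_add_le _ _

lemma l1Norm_sub_le (p q : R[X]) : (p - q).l1Norm ≤ p.l1Norm + q.l1Norm := by
  simpa [sub_eq_add_neg] using l1Norm_add_le p (-q)

lemma l1Norm_sum_le {ι : Type*} (s : Finset ι) (f : ι → R[X]) :
    (∑ i ∈ s, f i).l1Norm ≤ ∑ i ∈ s, (f i).l1Norm :=
  le_sum_of_subadditive l1Norm l1Norm_zero.le l1Norm_add_le s f

lemma l1Norm_monomial_mul_le (n : ℕ) (a : R) (q : R[X]) :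
    (monomial n a * q).l1Norm ≤ ‖a‖ * q.l1Norm := by
  have hsupp : (monomial n a * q).support ⊆ q.support.image (· + n) := by
    intro k hk
    rw [← C_mul_X_pow_eq_monomial, mul_assoc, mem_support_iff, coeff_C_mul, coeff_X_pow_mul'] at hk
    split_ifs at hk with hnk
    · exact mem_image.mpr ⟨k - n, mem_support_iff.mpr (right_ne_zero_of_mul hk), by omega⟩
    · exact absurd (mul_zero a) hk
  rw [l1Norm_eq_sum_of_support_subset hsupp, sum_image fun _ _ _ _ => Nat.add_right_cancel,
    l1Norm, Polynomial.sum_def, mul_sum]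
  exact sum_le_sum fun k _ => by simpa only [coeff_monomial_mul] using norm_mul_le _ _

lemma l1Norm_mul_le (p q : R[X]) : (p * q).l1Norm ≤ p.l1Norm * q.l1Norm := by
  conv_lhs => rw [p.as_sum_support, sum_mul]
  calc _ ≤ ∑ k ∈ p.support, (monomial k (p.coeff k) * q).l1Norm := l1Norm_sum_le _ _
    _ ≤ ∑ k ∈ p.support, ‖p.coeff k‖ * q.l1Norm :=
      sum_le_sum fun k _ => l1Norm_monomial_mul_le _ _ _
    _ = p.l1Norm * q.l1Norm := by rw [← sum_mul]; rfl

lemma l1Norm_C_mul_le (a : R) (q : R[X]) : (C a * q).l1Norm ≤ ‖a‖ * q.l1Norm := by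
  simpa using l1Norm_monomial_mul_le 0 a q

lemma l1Norm_mul_sq_le (q p : R[X]) : (q * p ^ 2).l1Norm ≤ q.l1Norm * p.l1Norm ^ 2 := by
  rw [sq, sq, ← mul_assoc, ← mul_assoc]
  exact (l1Norm_mul_le _ _).trans
    (mul_le_mul_of_nonneg_right (l1Norm_mul_le _ _) (l1Norm_nonneg _))

variable [NormOneClass R]

lemma l1Norm_X_sub_C_le (c : R) : (X - C c).l1Norm ≤ 1 + ‖c‖ := by
  simpa using l1Norm_sub_le X (C c)

lemma l1Norm_one_sub_C_mul_X_sub_C_le (a c : R) :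
    (1 - C a * (X - C c)).l1Norm ≤ 1 + ‖a‖ * (1 + ‖c‖) := by
  refine (l1Norm_sub_le _ _).trans ?_
  rw [← C_1, l1Norm_C, norm_one]
  gcongr
  exact (l1Norm_C_mul_le _ _).trans
    (mul_le_mul_of_nonneg_left (l1Norm_X_sub_C_le c) (norm_nonneg a))

end SeminormedRing

lemma l1Norm_prod_le {R ι : Type*} [SeminormedCommRing R] [NormOneClass R] (s : Finset ι)
    (f : ι → R[X]) : (∏ i ∈ s, f i).l1Norm ≤ ∏ i ∈ s, (f i).l1Norm := by
  classical
  induction s using Finset.induction_on with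
  | empty => rw [prod_empty, prod_empty, ← C_1, l1Norm_C, norm_one]
  | insert i s hi ih =>
    rw [prod_insert hi, prod_insert hi]
    exact (l1Norm_mul_le _ _).trans
      (mul_le_mul_of_nonneg_left ih (l1Norm_nonneg _))

end Polynomial

namespace Lagrange

variable {F ι : Type*} [DecidableEq ι]

section Field

variable [Field F] {s : Finset ι} {v : ι → F} {i j : ι}

lemma eval_derivative_basis_self (hvs : Set.InjOn v s) (hi : i ∈ s) :
    (derivative (Lagrange.basis s v i)).eval (v i) = ∑ j ∈ s.erase i, (v i - v j)⁻¹ := by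
  have hne : ∀ j ∈ s.erase i, v i ≠ v j := fun j hj h =>
    (ne_of_mem_erase hj).symm (hvs hi (mem_of_mem_erase hj) h)
  rw [Lagrange.basis, derivative_prod_finset, eval_finsetSum]
  refine sum_congr rfl fun j _ => ?_
  rw [eval_mul, eval_prod, prod_eq_one fun k hk =>
    eval_basisDivisor_left_of_ne (hne k (mem_of_mem_erase hk))]
  simp [basisDivisor]

variable (s v i)

-- With `L = Lagrange.basis s v i`, the factor `1 - 2 L'(v i) (X - v i)` cancels the slope of
-- `L²` at `v i`.
noncomputable def hermiteValueBasis : F[X] :=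
  (1 - C (2 * (derivative (Lagrange.basis s v i)).eval (v i)) * (X - C (v i))) *
    Lagrange.basis s v i ^ 2

noncomputable def hermiteSlopeBasis : F[X] := (X - C (v i)) * Lagrange.basis s v i ^ 2

variable {s v i}

lemma eval_hermiteValueBasis (hvs : Set.InjOn v s) (hj : j ∈ s) :
    (hermiteValueBasis s v i).eval (v j) = if i = j then 1 else 0 := by
  split_ifs with hij
  · subst hij; simp [hermiteValueBasis, eval_basis_self hvs hj]
  · simp [hermiteValueBasis, eval_basis_of_ne hij hj]

lemma eval_derivative_hermiteValueBasis (hvs : Set.InjOn v s) (hj : j ∈ s) :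
    (derivative (hermiteValueBasis s v i)).eval (v j) = 0 := by
  by_cases hij : i = j
  · subst hij; simp [hermiteValueBasis, derivative_mul, sq, eval_basis_self hvs hj]; ring
  · simp [hermiteValueBasis, derivative_mul, sq, eval_basis_of_ne hij hj]

lemma eval_hermiteSlopeBasis (hj : j ∈ s) : (hermiteSlopeBasis s v i).eval (v j) = 0 := by
  by_cases hij : i = j
  · subst hij; simp [hermiteSlopeBasis]
  · simp [hermiteSlopeBasis, eval_basis_of_ne hij hj]

lemma eval_derivative_hermiteSlopeBasis (hvs : Set.InjOn v s) (hj : j ∈ s) :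
    (derivative (hermiteSlopeBasis s v i)).eval (v j) = if i = j then 1 else 0 := by
  split_ifs with hij
  · subst hij; simp [hermiteSlopeBasis, derivative_mul, sq, eval_basis_self hvs hj]
  · simp [hermiteSlopeBasis, derivative_mul, sq, eval_basis_of_ne hij hj]

lemma natDegree_mul_basis_sq_lt {q : F[X]} (hq : q.natDegree ≤ 1) (hvs : Set.InjOn v s)
    (hi : i ∈ s) : (q * Lagrange.basis s v i ^ 2).natDegree < 2 * #s := by
  have hs : 0 < #s := card_pos.mpr ⟨i, hi⟩
  calc _ ≤ q.natDegree + (Lagrange.basis s v i ^ 2).natDegree := natDegree_mul_le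
    _ ≤ 1 + 2 * (#s - 1) := by
      gcongr
      exact natDegree_pow_le.trans (by rw [natDegree_basis hvs hi])
    _ < 2 * #s := by omega

lemma natDegree_hermiteValueBasis_lt (hvs : Set.InjOn v s) (hi : i ∈ s) :
    (hermiteValueBasis s v i).natDegree < 2 * #s :=
  natDegree_mul_basis_sq_lt (by compute_degree) hvs hi

lemma natDegree_hermiteSlopeBasis_lt (hvs : Set.InjOn v s) (hi : i ∈ s) :
    (hermiteSlopeBasis s v i).natDegree < 2 * #s :=
  natDegree_mul_basis_sq_lt (natDegree_X_sub_C_le _) hvs hi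

end Field

section NormedField

variable [NormedField F] {s : Finset ι} {v : ι → F} {i : ι}

lemma l1Norm_basisDivisor_le (a b : F) : (basisDivisor a b).l1Norm ≤ (1 + ‖b‖) / ‖b - a‖ := by
  rw [basisDivisor, div_eq_inv_mul, norm_sub_rev, ← norm_inv]
  exact (l1Norm_C_mul_le _ _).trans
    (mul_le_mul_of_nonneg_left (l1Norm_X_sub_C_le b) (norm_nonneg _))

lemma l1Norm_basis_le :
    (Lagrange.basis s v i).l1Norm ≤ ∏ j ∈ s.erase i, (1 + ‖v j‖) / ‖v j - v i‖ :=
  (l1Norm_prod_le _ _).trans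
    (prod_le_prod (fun _ _ => l1Norm_nonneg _) fun _ _ => l1Norm_basisDivisor_le _ _)

lemma norm_eval_derivative_basis_self_le (hvs : Set.InjOn v s) (hi : i ∈ s) :
    ‖(derivative (Lagrange.basis s v i)).eval (v i)‖ ≤ ∑ j ∈ s.erase i, ‖v j - v i‖⁻¹ := by
  rw [eval_derivative_basis_self hvs hi]
  exact (norm_sum_le _ _).trans_eq (by simp_rw [norm_inv, norm_sub_rev])

lemma l1Norm_hermiteValueBasis_le (hvs : Set.InjOn v s) (hi : i ∈ s) :
    (hermiteValueBasis s v i).l1Norm ≤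
      (1 + 2 * (1 + ‖v i‖) * ∑ j ∈ s.erase i, ‖v j - v i‖⁻¹) *
        (∏ j ∈ s.erase i, (1 + ‖v j‖) / ‖v j - v i‖) ^ 2 := by
  set c := (derivative (Lagrange.basis s v i)).eval (v i)
  have hnorm_two : ‖(2 : F)‖ ≤ 2 := by simpa [one_add_one_eq_two] using norm_add_le (1 : F) 1
  have hc : ‖2 * c‖ ≤ 2 * ∑ j ∈ s.erase i, ‖v j - v i‖⁻¹ := by
    rw [norm_mul]
    gcongr
    exact norm_eval_derivative_basis_self_le hvs hi
  have hfactor : (1 - C (2 * c) * (X - C (v i))).l1Norm ≤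
      1 + 2 * (1 + ‖v i‖) * ∑ j ∈ s.erase i, ‖v j - v i‖⁻¹ :=
    (l1Norm_one_sub_C_mul_X_sub_C_le _ _).trans (by nlinarith [norm_nonneg (v i)])
  exact (l1Norm_mul_sq_le _ _).trans <| mul_le_mul hfactor
    (pow_le_pow_left₀ (l1Norm_nonneg _) l1Norm_basis_le 2) (by positivity)
    (hfactor.trans' (l1Norm_nonneg _))

lemma l1Norm_hermiteSlopeBasis_le :
    (hermiteSlopeBasis s v i).l1Norm ≤
      (1 + ‖v i‖) * (∏ j ∈ s.erase i, (1 + ‖v j‖) / ‖v j - v i‖) ^ 2 :=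
  (l1Norm_mul_sq_le _ _).trans <| mul_le_mul (l1Norm_X_sub_C_le _)
    (pow_le_pow_left₀ (l1Norm_nonneg _) l1Norm_basis_le 2) (by positivity) (by positivity)

end NormedField

end Lagrange

section HermiteBasis

variable {F ι : Type*} [Field F] [Fintype ι] [DecidableEq ι]

noncomputable def hermiteBasis (v : ι → F) : ι ⊕ ι → F[X] :=
  Sum.elim (Lagrange.hermiteValueBasis univ v) (Lagrange.hermiteSlopeBasis univ v)

variable {v : ι → F}

lemma eval_hermiteBasis (hv : Function.Injective v) (r : ι ⊕ ι) (j : ι) :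
    (hermiteBasis v r).eval (v j) = if r = Sum.inl j then 1 else 0 := by
  cases r <;> simp [hermiteBasis, Lagrange.eval_hermiteValueBasis hv.injOn,
    Lagrange.eval_hermiteSlopeBasis]

lemma eval_derivative_hermiteBasis (hv : Function.Injective v) (r : ι ⊕ ι) (j : ι) :
    (derivative (hermiteBasis v r)).eval (v j) = if r = Sum.inr j then 1 else 0 := by
  cases r <;> simp [hermiteBasis, Lagrange.eval_derivative_hermiteValueBasis hv.injOn,
    Lagrange.eval_derivative_hermiteSlopeBasis hv.injOn]

lemma natDegree_hermiteBasis_lt (hv : Function.Injective v) (r : ι ⊕ ι) :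
    (hermiteBasis v r).natDegree < 2 * Fintype.card ι := by
  cases r
  · exact Lagrange.natDegree_hermiteValueBasis_lt hv.injOn (mem_univ _)
  · exact Lagrange.natDegree_hermiteSlopeBasis_lt hv.injOn (mem_univ _)

end HermiteBasis

section ConfluentVandermonde

variable {n : ℕ}

lemma sum_rowIdx {M : Type*} [AddCommMonoid M] (f : ℕ → M) :
    ∑ r : Fin n ⊕ Fin n, f (rowIdx n r) = ∑ k ∈ range (2 * n), f k := by
  rw [Fintype.sum_sum_type, two_mul, sum_range_add]
  simp [rowIdx, Fin.sum_univ_eq_sum_range (fun k => f k),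
    Fin.sum_univ_eq_sum_range (fun k => f (n + k))]

lemma sum_norm_coeff_rowIdx {p : ℂ[X]} (hp : p.natDegree < 2 * n) :
    ∑ r : Fin n ⊕ Fin n, ‖p.coeff (rowIdx n r)‖ = p.l1Norm := by
  rw [sum_rowIdx (fun k => ‖p.coeff k‖), l1Norm_eq_sum_of_support_subset (supp_subset_range hp)]

lemma vecMul_UconfSq (x : Fin n → ℂ) {p : ℂ[X]} (hp : p.natDegree < 2 * n) :
    (fun r => p.coeff (rowIdx n r)) ᵥ* UconfSq n x =
      Sum.elim (fun j => p.eval (x j)) (fun j => (derivative p).eval (x j)) := by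
  ext (j | j)
  · simp only [Matrix.vecMul, dotProduct, UconfSq, Sum.elim_inl]
    rw [sum_rowIdx (fun k => p.coeff k * x j ^ k), eval_eq_sum_range' hp]
  · simp only [Matrix.vecMul, dotProduct, UconfSq, Sum.elim_inr]
    rw [sum_rowIdx (fun k => p.coeff k * ((k : ℂ) * x j ^ (k - 1))), derivative_eval,
      sum_over_range' _ (fun _ => by simp) _ hp]
    simp only [mul_assoc]

noncomputable def hermiteCoeffMatrix (x : Fin n → ℂ) :
    Matrix (Fin n ⊕ Fin n) (Fin n ⊕ Fin n) ℂ :=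
  fun r k => (hermiteBasis x r).coeff (rowIdx n k)

lemma hermiteCoeffMatrix_mul_UconfSq {x : Fin n → ℂ} (hx : Function.Injective x) :
    hermiteCoeffMatrix x * UconfSq n x = 1 := by
  ext r c
  have hdeg : (hermiteBasis x r).natDegree < 2 * n := by
    simpa only [Fintype.card_fin] using natDegree_hermiteBasis_lt hx r
  have hrow : hermiteCoeffMatrix x r = fun k => (hermiteBasis x r).coeff (rowIdx n k) := rfl
  rw [Matrix.mul_apply_eq_vecMul, hrow, vecMul_UconfSq x hdeg, Matrix.one_apply]
  rcases c with j | j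
  · rw [Sum.elim_inl, eval_hermiteBasis hx]
  · rw [Sum.elim_inr, eval_derivative_hermiteBasis hx]

lemma sum_norm_hermiteCoeffMatrix {x : Fin n → ℂ} (hx : Function.Injective x)
    (r : Fin n ⊕ Fin n) : ∑ k, ‖hermiteCoeffMatrix x r k‖ = (hermiteBasis x r).l1Norm :=
  sum_norm_coeff_rowIdx (p := hermiteBasis x r)
    (by simpa only [Fintype.card_fin] using natDegree_hermiteBasis_lt hx r)

end ConfluentVandermonde

theorem gautschi_confluent_vandermonde_inverse_norm_bound_general
    (n : ℕ) (x : Fin n → ℂ) (hx : Function.Injective x) :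
    IsUnit (UconfSq n x).det ∧
      rowSumNorm (UconfSq n x)⁻¹ ≤
        ⨆ l : Fin n,
          max (1 + ‖x l‖)
              (1 + 2 * (1 + ‖x l‖) *
                ∑ v ∈ Finset.univ.erase l, ‖x v - x l‖⁻¹) *
            (∏ v ∈ Finset.univ.erase l,
              (1 + ‖x v‖) / ‖x v - x l‖) ^ 2 := by
  have hBU := hermiteCoeffMatrix_mul_UconfSq hx
  refine ⟨Matrix.isUnit_det_of_left_inverse hBU, ?_⟩
  rw [Matrix.inv_eq_left_inv hBU, rowSumNorm]
  refine Real.iSup_le (fun r => ?_) (Real.iSup_nonneg fun l => by positivity)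
  rw [sum_norm_hermiteCoeffMatrix hx]
  rcases r with j | j
  all_goals refine le_ciSup_of_le (Set.finite_range _).bddAbove j ?_
  · exact (Lagrange.l1Norm_hermiteValueBasis_le hx.injOn (mem_univ j)).trans <|
      mul_le_mul_of_nonneg_right (le_max_right _ _) (by positivity)
  · exact Lagrange.l1Norm_hermiteSlopeBasis_le.trans <|
      mul_le_mul_of_nonneg_right (le_max_left _ _) (by positivity)

/-- Theorem (Gautschi): for pairwise distinct `x_1, …, x_n`, the confluent Vandermonde matrix
`𝐔_{2n}(x)` is invertible and, with
`b_λ = max(1 + |x_λ|, 1 + 2(1 + |x_λ|) Σ_{ν≠λ} 1/|x_ν - x_λ|)`, one has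
`‖𝐔_{2n}(x)⁻¹‖_∞ ≤ max_λ b_λ (Π_{ν≠λ} (1 + |x_ν|)/|x_ν - x_λ|)²`. -/
theorem gautschi_confluent_vandermonde_inverse_norm_bound
    (n : ℕ) (hn : 1 ≤ n) (x : Fin n → ℂ) (hx : Function.Injective x) :
    IsUnit (UconfSq n x).det ∧
      rowSumNorm (UconfSq n x)⁻¹ ≤
        ⨆ l : Fin n,
          max (1 + ‖x l‖)
              (1 + 2 * (1 + ‖x l‖) *
                ∑ v ∈ Finset.univ.erase l, ‖x v - x l‖⁻¹) *
            (∏ v ∈ Finset.univ.erase l,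
              (1 + ‖x v‖) / ‖x v - x l‖) ^ 2 :=
  gautschi_confluent_vandermonde_inverse_norm_bound_general n x hx
end
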